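/- Let X be a compact metric space, (k_M) kernels on X^M converging in mean field to a continuous kernel k on P(X) (i.e., sup_{x,x' ∈ X^M} |k_M(x,x') − k(μ̂[x],μ̂[x'])| → 0), with all k_M and k bounded and Lipschitz with respect to the metric induced by empirical measures. Let f_M ∈ H_{k_M} with ‖f_M‖_{k_M} ≤ B for all M and suppose f_M converges in mean field to a continuous function f : P(X) → ℝ (i.e., sup_{x ∈ X^M}|f_M(x) − f(μ̂[x])| → 0). Then f belongs to the RKHS H_k of k and ‖f‖_k ≤ B. -/

import Mathlib

open MeasureTheory Filter
open scoped ENNReal RealInnerProductSpace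

/-- Kantorovich–Rubinstein metric: `d_KR(μ,ν) = sup{∫φ dμ − ∫φ dν : φ 1-Lipschitz}`. -/
noncomputable def dKR {X : Type*} [MeasurableSpace X] [MetricSpace X] (μ ν : Measure X) : ℝ :=
  ⨆ φ : {f : X → ℝ // LipschitzWith 1 f}, (∫ x, φ.1 x ∂μ - ∫ x, φ.1 x ∂ν)

/-- The empirical measure `(1/M) ∑ᵢ δ_{xᵢ}` of a tuple `x ∈ X^M`. -/
noncomputable def empMeasure {X : Type*} [MeasurableSpace X] {M : ℕ} (x : Fin M → X) : Measure X :=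
  ((M : ℝ≥0∞)⁻¹) • ∑ i, Measure.dirac (x i)

theorem empMeasure_prob {X : Type*} [MeasurableSpace X] {M : ℕ} (x : Fin (M + 1) → X) :
    IsProbabilityMeasure (empMeasure x) := by
  constructor
  simp only [empMeasure, Measure.smul_apply, smul_eq_mul]
  rw [Measure.coe_finset_sum]
  simp only [Finset.sum_apply, measure_univ, Finset.sum_const, Finset.card_univ,
    Fintype.card_fin, nsmul_eq_mul, mul_one]
  exact ENNReal.inv_mul_cancel (by exact_mod_cast Nat.succ_ne_zero M) (by simp)

/-- The empirical measure of a (nonempty) tuple, as a probability measure. -/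
noncomputable def empProb {X : Type*} [MeasurableSpace X] {M : ℕ} (x : Fin (M + 1) → X) :
    ProbabilityMeasure X :=
  ⟨empMeasure x, empMeasure_prob x⟩

/-!
Realise `f` as a bounded linear functional on the span of the feature vectors `Φ μ`. Given a
finite combination `∑ c μ • Φ μ`, approximate each `μ` in `d_KR` by empirical measures of tuples
`x_μ ∈ X^(M+1)`: quantise `μ` on a fine finite measurable partition of the compact space, then
round the cell masses to multiples of `1/(M+1)`. Mean-field convergence of the kernels together
with the Lipschitz bound on `k` gives `‖∑ c μ • ΦM (x_μ)‖ → ‖∑ c μ • Φ μ‖`, and since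
`d_KR`-convergence implies weak convergence, mean-field convergence of `fM` and continuity of `f`
give `∑ c μ * ⟪fM, ΦM (x_μ)⟫ → ∑ c μ * f μ`. Cauchy–Schwarz with `‖fM‖ ≤ B` passes to the limit
as `|∑ c μ * f μ| ≤ B * ‖∑ c μ • Φ μ‖`, so the functional extends by density to `Hk` with norm at
most `B`, and its Riesz representative is `g`.
-/

open Set Metric Function Topology
open scoped NNReal

theorem exists_tendsto_zero_of_eventually_exists_le {α : ℕ → Type*} [∀ n, Nonempty (α n)]
    {g : ∀ n, α n → ℝ} (hg : ∀ n a, 0 ≤ g n a) (h : ∀ δ > 0, ∀ᶠ n in atTop, ∃ a, g n a ≤ δ) :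
    ∃ a : ∀ n, α n, Tendsto (fun n => g n (a n)) atTop (𝓝 0) := by
  have hinf : Tendsto (fun n => ⨅ a, g n a) atTop (𝓝 0) := by
    refine tendsto_order.2 ⟨fun b hb => Eventually.of_forall fun n =>
      hb.trans_le (le_ciInf (hg n)), fun b hb => ?_⟩
    filter_upwards [h (b / 2) (half_pos hb)] with n ⟨a, ha⟩
    exact (ciInf_le ⟨0, forall_mem_range.2 (hg n)⟩ a).trans_lt (ha.trans_lt (half_lt_self hb))
  choose a ha using fun n => exists_lt_of_ciInf_lt
    (lt_add_of_pos_right (⨅ a, g n a) (Nat.one_div_pos_of_nat (n := n)))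
  refine ⟨a, squeeze_zero (fun n => hg n _) (fun n => (ha n).le) ?_⟩
  simpa using hinf.add tendsto_one_div_add_atTop_nhds_zero_nat

theorem tendsto_of_forall_abs_sub_le {u v : ℕ → ℝ} {a : ℝ}
    (h : ∀ ε > 0, ∃ N, ∀ n ≥ N, |u n - v n| ≤ ε) (hv : Tendsto v atTop (𝓝 a)) :
    Tendsto u atTop (𝓝 a) := by
  have hsub : Tendsto (u - v) atTop (𝓝 0) := Metric.tendsto_atTop.2 fun ε hε =>
    (h (ε / 2) (half_pos hε)).imp fun N hN n hn => by
      simpa [Real.dist_eq] using (hN n hn).trans_lt (half_lt_self hε)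
  simpa using hsub.add hv

theorem exists_nat_sum_eq_abs_sub_le {J : ℕ} {w : Fin J → ℝ} (hw : ∀ j, 0 ≤ w j)
    (hsum : ∑ j, w j = 1) (N : ℕ) :
    ∃ n : Fin J → ℕ, ∑ j, n j = N ∧ ∑ j, |(n j : ℝ) - N * w j| ≤ 2 * J := by
  obtain ⟨j₀⟩ : Nonempty (Fin J) := by
    by_contra hJ
    simp [not_nonempty_iff.1 hJ] at hsum
  let F : Fin J → ℕ := fun j => ⌊N * w j⌋₊
  have hF_le : ∀ j, (F j : ℝ) ≤ N * w j := fun j => Nat.floor_le (by positivity [hw j])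
  have hF_gt : ∀ j, N * w j < F j + 1 := fun j => Nat.lt_floor_add_one _
  have hN : (N : ℝ) = ∑ j, N * w j := by rw [← Finset.mul_sum, hsum, mul_one]
  have hsumF : ∑ j, F j ≤ N := by
    have : (∑ j, F j : ℝ) ≤ N := hN ▸ Finset.sum_le_sum fun j _ => hF_le j
    exact_mod_cast this
  have hR : ((N - ∑ j, F j : ℕ) : ℝ) ≤ J := by
    have : (N : ℝ) < ∑ j, (F j + 1 : ℝ) := hN ▸ Finset.sum_lt_sum_of_nonempty
      ⟨j₀, Finset.mem_univ j₀⟩ fun j _ => hF_gt j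
    rw [Nat.cast_sub hsumF]
    push_cast [Finset.sum_add_distrib] at this ⊢
    simp only [Finset.sum_const, Finset.card_univ, Fintype.card_fin, nsmul_eq_mul, mul_one] at this
    linarith
  -- Round each `N * w j` down and give the missing mass, which is less than `J`, to `j₀`.
  refine ⟨fun j => F j + if j = j₀ then N - ∑ j, F j else 0, ?_, ?_⟩
  · simp only [Finset.sum_add_distrib, Finset.sum_ite_eq', Finset.mem_univ, if_true]
    omega
  calc ∑ j, |((F j + if j = j₀ then N - ∑ j, F j else 0 : ℕ) : ℝ) - N * w j|
      ≤ ∑ j, (1 + if j = j₀ then ((N - ∑ j, F j : ℕ) : ℝ) else 0) := by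
        refine Finset.sum_le_sum fun j _ => ?_
        push_cast
        rw [add_sub_right_comm]
        refine (abs_add_le _ _).trans (add_le_add ?_ ?_)
        · exact abs_le.2 ⟨by linarith [hF_gt j], by linarith [hF_le j]⟩
        · split_ifs <;> simp
    _ ≤ 2 * J := by
        simp only [Finset.sum_add_distrib, Finset.sum_ite_eq', Finset.mem_univ, if_true,
          Finset.sum_const, Finset.card_univ, Fintype.card_fin, nsmul_eq_mul, mul_one]
        linarith

theorem abs_sum_mul_sub_sum_mul_le {ι : Type*} (s : Finset ι) {a b v : ι → ℝ} {D : ℝ}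
    (hab : ∑ i ∈ s, a i = ∑ i ∈ s, b i) (hv : ∀ i ∈ s, ∀ j ∈ s, |v i - v j| ≤ D) :
    |∑ i ∈ s, a i * v i - ∑ i ∈ s, b i * v i| ≤ D * ∑ i ∈ s, |a i - b i| := by
  rcases s.eq_empty_or_nonempty with rfl | ⟨i₀, hi₀⟩
  · simp
  have hshift : ∑ i ∈ s, a i * v i - ∑ i ∈ s, b i * v i
      = ∑ i ∈ s, (a i - b i) * (v i - v i₀) := by
    simp only [sub_mul, mul_sub, Finset.sum_sub_distrib, ← Finset.sum_mul, hab]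
    ring
  rw [hshift, Finset.mul_sum]
  refine (Finset.abs_sum_le_sum_abs _ _).trans (Finset.sum_le_sum fun i hi => ?_)
  rw [abs_mul, mul_comm]
  exact mul_le_mul_of_nonneg_right (hv i hi i₀ hi₀) (abs_nonneg _)

theorem norm_sum_smul_eq_sqrt {E : Type*} [NormedAddCommGroup E] [InnerProductSpace ℝ E]
    {ι : Type*} (s : Finset ι) (c : ι → ℝ) (v : ι → E) :
    ‖∑ i ∈ s, c i • v i‖ = √(∑ i ∈ s, ∑ j ∈ s, c i * c j * ⟪v i, v j⟫) := by
  simp only [norm_eq_sqrt_real_inner, sum_inner, inner_sum, real_inner_smul_left,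
    real_inner_smul_right, mul_assoc]
  exact congrArg _ (Finset.sum_congr rfl fun i _ => Finset.sum_congr rfl fun j _ => by
    rw [real_inner_comm])

theorem exists_inner_eq_of_abs_sum_le {ι E : Type*} [NormedAddCommGroup E]
    [InnerProductSpace ℝ E] [CompleteSpace E] {Φ : ι → E}
    (hdense : Dense (Submodule.span ℝ (range Φ) : Set E)) {f : ι → ℝ} {B : ℝ} (hB : 0 ≤ B)
    (h : ∀ (s : Finset ι) (c : ι → ℝ), |∑ i ∈ s, c i * f i| ≤ B * ‖∑ i ∈ s, c i • Φ i‖) :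
    ∃ g : E, (∀ i, f i = ⟪g, Φ i⟫) ∧ ‖g‖ ≤ B := by
  have hρ : DenseRange (Finsupp.linearCombination ℝ Φ) := by
    rwa [DenseRange, ← LinearMap.coe_range, Finsupp.range_linearCombination]
  have hbound : ∀ c : ι →₀ ℝ, ‖Finsupp.linearCombination ℝ f c‖ ≤
      B * ‖Finsupp.linearCombination ℝ Φ c‖ := fun c => by
    simpa [Finsupp.linearCombination_apply, Finsupp.sum] using h c.support c
  let T := (Finsupp.linearCombination ℝ f).extendOfNorm (Finsupp.linearCombination ℝ Φ)
  refine ⟨(InnerProductSpace.toDual ℝ E).symm T, fun i => ?_, ?_⟩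
  · rw [InnerProductSpace.toDual_symm_apply]
    simpa using (LinearMap.extendOfNorm_eq hρ ⟨B, hbound⟩ (Finsupp.single i 1)).symm
  · rw [LinearIsometryEquiv.norm_map]
    exact T.opNorm_le_bound hB (LinearMap.norm_extendOfNorm_apply_le hρ B hbound)

section KantorovichRubinstein

variable {X : Type*} [MetricSpace X] [CompactSpace X] [MeasurableSpace X] [OpensMeasurableSpace X]
  {μ ν : ProbabilityMeasure X}

theorem LipschitzWith.integrable {K : ℝ≥0} {φ : X → ℝ} (hφ : LipschitzWith K φ)
    (μ : Measure X) [IsFiniteMeasure μ] : Integrable φ μ :=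
  hφ.continuous.integrable_of_hasCompactSupport (HasCompactSupport.of_compactSpace φ)

theorem integral_sub_integral_le_two_mul_diam {φ : X → ℝ} (hφ : LipschitzWith 1 φ) :
    ∫ x, φ x ∂(μ : Measure X) - ∫ x, φ x ∂(ν : Measure X) ≤ 2 * diam (univ : Set X) := by
  obtain ⟨y₀⟩ := μ.nonempty
  have hbound : ∀ x, ‖φ x - φ y₀‖ ≤ diam (univ : Set X) := fun x =>
    (hφ.dist_le_mul x y₀).trans
      (by simpa using dist_le_diam_of_mem isCompact_univ.isBounded trivial trivial)
  have hμ := norm_integral_le_of_norm_le_const (μ := (μ : Measure X)) (Eventually.of_forall hbound)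
  have hν := norm_integral_le_of_norm_le_const (μ := (ν : Measure X)) (Eventually.of_forall hbound)
  rw [integral_sub (hφ.integrable _) (integrable_const _), integral_const, probReal_univ,
    one_smul, mul_one, Real.norm_eq_abs] at hμ hν
  have := le_abs_self (∫ x, φ x ∂(μ : Measure X) - φ y₀)
  have := neg_abs_le (∫ x, φ x ∂(ν : Measure X) - φ y₀)
  linarith

theorem bddAbove_integral_sub_integral :
    BddAbove (range fun φ : {f : X → ℝ // LipschitzWith 1 f} =>
      ∫ x, φ.1 x ∂(μ : Measure X) - ∫ x, φ.1 x ∂(ν : Measure X)) :=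
  ⟨_, forall_mem_range.2 fun φ => integral_sub_integral_le_two_mul_diam φ.2⟩

theorem le_dKR {φ : X → ℝ} (hφ : LipschitzWith 1 φ) :
    ∫ x, φ x ∂(μ : Measure X) - ∫ x, φ x ∂(ν : Measure X) ≤ dKR (μ : Measure X) ν :=
  le_ciSup bddAbove_integral_sub_integral (⟨φ, hφ⟩ : {f : X → ℝ // LipschitzWith 1 f})

omit [CompactSpace X] [OpensMeasurableSpace X] in
theorem dKR_le {μ ν : Measure X} {δ : ℝ}
    (h : ∀ φ : X → ℝ, LipschitzWith 1 φ → ∫ x, φ x ∂μ - ∫ x, φ x ∂ν ≤ δ) : dKR μ ν ≤ δ :=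
  have : Nonempty {f : X → ℝ // LipschitzWith 1 f} := ⟨⟨0, LipschitzWith.const' 0⟩⟩
  ciSup_le fun φ => h φ.1 φ.2

theorem dKR_nonneg : 0 ≤ dKR (μ : Measure X) ν := by
  simpa using le_dKR (μ := μ) (ν := ν) (LipschitzWith.const' (0 : ℝ))

theorem abs_integral_sub_integral_le_mul_dKR {K : ℝ≥0} (hK : 0 < K) {φ : X → ℝ}
    (hφ : LipschitzWith K φ) :
    |∫ x, φ x ∂(μ : Measure X) - ∫ x, φ x ∂(ν : Measure X)| ≤ K * dKR (μ : Measure X) ν := by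
  have hK' : (0 : ℝ) < K := hK
  have key : ∀ ψ : X → ℝ, LipschitzWith K ψ →
      ∫ x, ψ x ∂(μ : Measure X) - ∫ x, ψ x ∂(ν : Measure X) ≤ K * dKR (μ : Measure X) ν := by
    intro ψ hψ
    have hscaled : LipschitzWith 1 fun x => (K : ℝ)⁻¹ * ψ x :=
      LipschitzWith.of_dist_le_mul fun x y => by
        rw [Real.dist_eq, ← mul_sub, abs_mul, abs_inv, abs_of_pos hK', NNReal.coe_one, one_mul,
          inv_mul_le_iff₀ hK', ← Real.dist_eq]
        exact hψ.dist_le_mul x y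
    have := le_dKR (μ := μ) (ν := ν) hscaled
    rw [integral_const_mul, integral_const_mul, ← mul_sub, inv_mul_le_iff₀ hK'] at this
    exact this
  refine abs_le.2 ⟨?_, key φ hφ⟩
  have := key (-φ) hφ.neg
  simp only [Pi.neg_apply, integral_neg] at this
  linarith

theorem tendsto_of_tendsto_dKR {ι : Type*} {l : Filter ι} [l.IsCountablyGenerated]
    {ν : ι → ProbabilityMeasure X} {μ : ProbabilityMeasure X}
    (h : Tendsto (fun i => dKR (ν i : Measure X) μ) l (𝓝 0)) : Tendsto ν l (𝓝 μ) := by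
  refine tendsto_iff_forall_lipschitz_integral_tendsto.2 fun φ _ ⟨K, hφ⟩ => ?_
  have hφ' : LipschitzWith (K + 1) φ := hφ.weaken le_self_add
  refine tendsto_iff_norm_sub_tendsto_zero.2 <| squeeze_zero (fun _ => norm_nonneg _)
    (fun i => abs_integral_sub_integral_le_mul_dKR (add_pos_of_nonneg_of_pos K.2 one_pos) hφ') ?_
  simpa using h.const_mul ((K + 1 : ℝ≥0) : ℝ)

end KantorovichRubinstein

section EmpiricalMeasure

variable {X : Type*} [MeasurableSpace X] [MeasurableSingletonClass X]

theorem integral_empMeasure {N : ℕ} (x : Fin N → X) (φ : X → ℝ) :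
    ∫ y, φ y ∂(empMeasure x) = (N : ℝ)⁻¹ * ∑ i, φ (x i) := by
  rw [empMeasure, integral_smul_measure,
    integral_finsetSum_measure fun i _ => integrable_dirac enorm_lt_top]
  simp [integral_dirac]

theorem exists_integral_empMeasure_eq {J N : ℕ} (p : Fin J → X) (n : Fin J → ℕ)
    (hn : ∑ j, n j = N) :
    ∃ x : Fin N → X, ∀ φ : X → ℝ, ∫ y, φ y ∂(empMeasure x) = ∑ j, (n j / N : ℝ) * φ (p j) := by
  let e : Fin N ≃ Σ j, Fin (n j) := (Fintype.equivFinOfCardEq (by simp [hn])).symm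
  refine ⟨fun i => p (e i).1, fun φ => ?_⟩
  rw [integral_empMeasure, e.sum_comp (fun σ => φ (p σ.1)), Fintype.sum_sigma, Finset.mul_sum]
  simp [div_eq_inv_mul, mul_assoc]

end EmpiricalMeasure

theorem exists_measurable_partition_subset_ball (X : Type*) [MetricSpace X] [CompactSpace X]
    [MeasurableSpace X] [OpensMeasurableSpace X] {r : ℝ} (hr : 0 < r) :
    ∃ (J : ℕ) (p : Fin J → X) (A : Fin J → Set X), (∀ j, MeasurableSet (A j)) ∧
      Pairwise (Disjoint on A) ∧ ⋃ j, A j = univ ∧ ∀ j, A j ⊆ ball (p j) r := by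
  obtain ⟨t, ht⟩ := isCompact_univ.elim_finite_subcover (fun x : X => ball x r)
    (fun _ => isOpen_ball) fun x _ => mem_iUnion.2 ⟨x, mem_ball_self hr⟩
  let p : Fin t.card → X := fun j => t.equivFin.symm j
  refine ⟨t.card, p, disjointed fun j => ball (p j) r,
    fun j => disjointedRec (fun _ _ hs => hs.diff measurableSet_ball) measurableSet_ball,
    disjoint_disjointed _, ?_, disjointed_subset _⟩
  rw [iUnion_disjointed, eq_univ_iff_forall]
  intro x
  obtain ⟨y, hy, hxy⟩ := mem_iUnion₂.1 (ht (mem_univ x))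
  exact mem_iUnion.2 ⟨t.equivFin ⟨y, hy⟩, by simpa [p] using hxy⟩

section EmpiricalApproximation

variable {X : Type*} [MetricSpace X] [CompactSpace X] [MeasurableSpace X] [OpensMeasurableSpace X]

theorem abs_integral_sub_sum_le {J : ℕ} {p : Fin J → X} {A : Fin J → Set X} {r : ℝ}
    (hA : ∀ j, MeasurableSet (A j)) (hdisj : Pairwise (Disjoint on A)) (hcover : ⋃ j, A j = univ)
    (hball : ∀ j, A j ⊆ ball (p j) r) (μ : ProbabilityMeasure X) {φ : X → ℝ}
    (hφ : LipschitzWith 1 φ) :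
    |∫ x, φ x ∂(μ : Measure X) - ∑ j, (μ : Measure X).real (A j) * φ (p j)| ≤ r := by
  have hsplit : ∫ x, φ x ∂(μ : Measure X) = ∑ j, ∫ x in A j, φ x ∂(μ : Measure X) := by
    rw [← setIntegral_univ, ← hcover,
      integral_iUnion_fintype hA hdisj fun j => (hφ.integrable (μ : Measure X)).integrableOn]
  rw [hsplit, ← Finset.sum_sub_distrib]
  calc |∑ j, (∫ x in A j, φ x ∂(μ : Measure X) - (μ : Measure X).real (A j) * φ (p j))|
      ≤ ∑ j, r * (μ : Measure X).real (A j) := by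
        refine (Finset.abs_sum_le_sum_abs _ _).trans (Finset.sum_le_sum fun j _ => ?_)
        rw [← smul_eq_mul, ← setIntegral_const, ← integral_sub
          (hφ.integrable (μ : Measure X)).integrableOn (integrableOn_const (measure_ne_top _ _)),
          ← Real.norm_eq_abs]
        refine norm_setIntegral_le_of_norm_le_const (measure_lt_top (μ : Measure X) _)
          fun x hx => ?_
        exact (hφ.dist_le_mul x (p j)).trans (by simpa using (mem_ball.1 (hball j hx)).le)
    _ = r := by
        rw [← Finset.mul_sum, ← measureReal_iUnion_fintype hdisj hA, hcover, probReal_univ,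
          mul_one]

theorem eventually_exists_dKR_empProb_le (μ : ProbabilityMeasure X) {δ : ℝ} (hδ : 0 < δ) :
    ∀ᶠ M in atTop, ∃ x : Fin (M + 1) → X, dKR (empProb x : Measure X) μ ≤ δ := by
  obtain ⟨J, p, A, hA, hdisj, hcover, hball⟩ :=
    exists_measurable_partition_subset_ball X (half_pos hδ)
  set D := diam (univ : Set X)
  set w : Fin J → ℝ := fun j => (μ : Measure X).real (A j)
  have hw : ∑ j, w j = 1 := by
    rw [← measureReal_iUnion_fintype hdisj hA, hcover, probReal_univ]
  have hsmall : ∀ᶠ M : ℕ in atTop, D * (2 * J) / (M + 1 : ℕ) ≤ δ / 2 :=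
    ((tendsto_const_div_atTop_nhds_zero_nat _).comp (tendsto_add_atTop_nat 1)).eventually
      (ge_mem_nhds (half_pos hδ))
  filter_upwards [hsmall] with M hM
  obtain ⟨n, hn, hnw⟩ := exists_nat_sum_eq_abs_sub_le (fun j => measureReal_nonneg) hw (M + 1)
  obtain ⟨x, hx⟩ := exists_integral_empMeasure_eq p n hn
  refine ⟨x, dKR_le fun φ hφ => ?_⟩
  have hpos : (0 : ℝ) < (M + 1 : ℕ) := by positivity
  have hdiscrete : |∑ j, (n j / (M + 1 : ℕ) : ℝ) * φ (p j) - ∑ j, w j * φ (p j)| ≤ δ / 2 := by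
    refine (abs_sum_mul_sub_sum_mul_le (D := D) _ ?_ fun i _ j _ => ?_).trans ?_
    · rw [hw, ← Finset.sum_div, ← Nat.cast_sum, hn, div_self hpos.ne']
    · exact (hφ.dist_le_mul _ _).trans
        (by simpa using dist_le_diam_of_mem isCompact_univ.isBounded trivial trivial)
    · have hrescale : ∀ j,
          |(n j / (M + 1 : ℕ) : ℝ) - w j| = |n j - (M + 1 : ℕ) * w j| / (M + 1 : ℕ) :=
        fun j => by rw [div_sub' hpos.ne', abs_div, abs_of_pos hpos]
      simp only [hrescale, ← Finset.sum_div, mul_div_assoc']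
      exact (div_le_div_of_nonneg_right (mul_le_mul_of_nonneg_left hnw diam_nonneg)
        hpos.le).trans hM
  have hpart := abs_integral_sub_sum_le hA hdisj hcover hball μ hφ
  have : ∫ y, φ y ∂(empProb x : Measure X) = ∑ j, (n j / (M + 1 : ℕ) : ℝ) * φ (p j) := hx φ
  rw [this]
  linarith [abs_le.1 hdiscrete, abs_le.1 hpart]

theorem exists_tendsto_dKR_empProb (μ : ProbabilityMeasure X) :
    ∃ x : ∀ M, Fin (M + 1) → X,
      Tendsto (fun M => dKR (empProb (x M) : Measure X) μ) atTop (𝓝 0) :=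
  have := μ.nonempty
  exists_tendsto_zero_of_eventually_exists_le (fun _ _ => dKR_nonneg)
    fun _ => eventually_exists_dKR_empProb_le μ

end EmpiricalApproximation

section MeanFieldLimit

variable {X : Type*} [MetricSpace X] [MeasurableSpace X]

theorem tendsto_kernel_of_meanField {kM : ∀ M : ℕ, (Fin (M + 1) → X) → (Fin (M + 1) → X) → ℝ}
    {k : ProbabilityMeasure X → ProbabilityMeasure X → ℝ} {L : ℝ}
    (hLipk : ∀ μ₁ μ₁' μ₂ μ₂' : ProbabilityMeasure X,
      |k μ₁ μ₁' - k μ₂ μ₂'| ≤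
        L * (dKR (μ₁ : Measure X) (μ₂ : Measure X) + dKR (μ₁' : Measure X) (μ₂' : Measure X)))
    (hMF : ∀ ε : ℝ, 0 < ε → ∃ M₀ : ℕ, ∀ M ≥ M₀, ∀ x x' : Fin (M + 1) → X,
      |kM M x x' - k (empProb x) (empProb x')| ≤ ε)
    {x x' : ∀ M, Fin (M + 1) → X} {μ μ' : ProbabilityMeasure X}
    (hx : Tendsto (fun M => dKR (empProb (x M) : Measure X) μ) atTop (𝓝 0))
    (hx' : Tendsto (fun M => dKR (empProb (x' M) : Measure X) μ') atTop (𝓝 0)) :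
    Tendsto (fun M => kM M (x M) (x' M)) atTop (𝓝 (k μ μ')) := by
  refine tendsto_of_forall_abs_sub_le (v := fun M => k (empProb (x M)) (empProb (x' M)))
    (fun ε hε => (hMF ε hε).imp fun _ h M hM => h M hM _ _) ?_
  refine tendsto_iff_norm_sub_tendsto_zero.2 <|
    squeeze_zero (fun _ => norm_nonneg _) (fun M => hLipk _ _ _ _) ?_
  simpa using (hx.add hx').const_mul L

variable [CompactSpace X] [OpensMeasurableSpace X]

theorem tendsto_of_meanField {u : ∀ M : ℕ, (Fin (M + 1) → X) → ℝ}
    {f : ProbabilityMeasure X → ℝ} (hf : Continuous f)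
    (hu : ∀ ε : ℝ, 0 < ε → ∃ M₀ : ℕ, ∀ M ≥ M₀, ∀ x : Fin (M + 1) → X,
      |u M x - f (empProb x)| ≤ ε)
    {x : ∀ M, Fin (M + 1) → X} {μ : ProbabilityMeasure X}
    (hx : Tendsto (fun M => dKR (empProb (x M) : Measure X) μ) atTop (𝓝 0)) :
    Tendsto (fun M => u M (x M)) atTop (𝓝 (f μ)) :=
  tendsto_of_forall_abs_sub_le (fun ε hε => (hu ε hε).imp fun _ h M hM => h M hM _)
    ((hf.tendsto μ).comp (tendsto_of_tendsto_dKR hx))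

theorem abs_sum_mul_le_mul_norm_sum_smul
    {HM : ℕ → Type*} [∀ M, NormedAddCommGroup (HM M)] [∀ M, InnerProductSpace ℝ (HM M)]
    {Hk : Type*} [NormedAddCommGroup Hk] [InnerProductSpace ℝ Hk]
    {ΦM : ∀ M : ℕ, (Fin (M + 1) → X) → HM M}
    {kM : ∀ M : ℕ, (Fin (M + 1) → X) → (Fin (M + 1) → X) → ℝ}
    (hkM : ∀ M x x', kM M x x' = ⟪ΦM M x, ΦM M x'⟫)
    {Φ : ProbabilityMeasure X → Hk} {k : ProbabilityMeasure X → ProbabilityMeasure X → ℝ}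
    (hkk : ∀ μ ν, k μ ν = ⟪Φ μ, Φ ν⟫) {L : ℝ}
    (hLipk : ∀ μ₁ μ₁' μ₂ μ₂' : ProbabilityMeasure X,
      |k μ₁ μ₁' - k μ₂ μ₂'| ≤
        L * (dKR (μ₁ : Measure X) (μ₂ : Measure X) + dKR (μ₁' : Measure X) (μ₂' : Measure X)))
    (hMF : ∀ ε : ℝ, 0 < ε → ∃ M₀ : ℕ, ∀ M ≥ M₀, ∀ x x' : Fin (M + 1) → X,
      |kM M x x' - k (empProb x) (empProb x')| ≤ ε)
    {B : ℝ} {fM : ∀ M, HM M} (hB : ∀ M, ‖fM M‖ ≤ B)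
    {f : ProbabilityMeasure X → ℝ} (hf : Continuous f)
    (hfMF : ∀ ε : ℝ, 0 < ε → ∃ M₀ : ℕ, ∀ M ≥ M₀, ∀ x : Fin (M + 1) → X,
      |⟪fM M, ΦM M x⟫ - f (empProb x)| ≤ ε)
    (s : Finset (ProbabilityMeasure X)) (c : ProbabilityMeasure X → ℝ) :
    |∑ μ ∈ s, c μ * f μ| ≤ B * ‖∑ μ ∈ s, c μ • Φ μ‖ := by
  choose x hx using fun μ : ProbabilityMeasure X => exists_tendsto_dKR_empProb μ
  have hinner : Tendsto (fun M => ⟪fM M, ∑ μ ∈ s, c μ • ΦM M (x μ M)⟫) atTop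
      (𝓝 (∑ μ ∈ s, c μ * f μ)) := by
    simp only [inner_sum, real_inner_smul_right]
    exact tendsto_finsetSum _ fun μ _ =>
      (tendsto_of_meanField (u := fun M x => ⟪fM M, ΦM M x⟫) hf hfMF (hx μ)).const_mul (c μ)
  have hnorm : Tendsto (fun M => ‖∑ μ ∈ s, c μ • ΦM M (x μ M)‖) atTop
      (𝓝 ‖∑ μ ∈ s, c μ • Φ μ‖) := by
    simp only [norm_sum_smul_eq_sqrt, ← hkM, ← hkk]
    exact (Real.continuous_sqrt.tendsto _).comp <| tendsto_finsetSum _ fun μ _ =>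
      tendsto_finsetSum _ fun ν _ =>
        (tendsto_kernel_of_meanField hLipk hMF (hx μ) (hx ν)).const_mul _
  exact le_of_tendsto_of_tendsto' hinner.abs (hnorm.const_mul B) fun M =>
    (abs_real_inner_le_norm _ _).trans (mul_le_mul_of_nonneg_right (hB M) (norm_nonneg _))

end MeanFieldLimit

theorem mean_field_rkhs_membership_general
    {X : Type*} [MetricSpace X] [CompactSpace X]
    [MeasurableSpace X] [BorelSpace X]
    {HM : ℕ → Type*} [∀ M, NormedAddCommGroup (HM M)] [∀ M, InnerProductSpace ℝ (HM M)]
    (ΦM : ∀ M : ℕ, (Fin (M + 1) → X) → HM M)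
    (kM : ∀ M : ℕ, (Fin (M + 1) → X) → (Fin (M + 1) → X) → ℝ)
    (hkM : ∀ M x x', kM M x x' = ⟪ΦM M x, ΦM M x'⟫)
    {Hk : Type*} [NormedAddCommGroup Hk] [InnerProductSpace ℝ Hk] [CompleteSpace Hk]
    (Φ : ProbabilityMeasure X → Hk)
    (k : ProbabilityMeasure X → ProbabilityMeasure X → ℝ)
    (hkk : ∀ μ ν, k μ ν = ⟪Φ μ, Φ ν⟫)
    (hdense : Dense (Submodule.span ℝ (Set.range Φ) : Set Hk))
    (L_k : ℝ)
    (hLipk : ∀ μ₁ μ₁' μ₂ μ₂' : ProbabilityMeasure X,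
      |k μ₁ μ₁' - k μ₂ μ₂'| ≤
        L_k * (dKR (μ₁ : Measure X) (μ₂ : Measure X) + dKR (μ₁' : Measure X) (μ₂' : Measure X)))
    (hMF : ∀ ε : ℝ, 0 < ε → ∃ M₀ : ℕ, ∀ M ≥ M₀, ∀ x x' : Fin (M + 1) → X,
      |kM M x x' - k (empProb x) (empProb x')| ≤ ε)
    (B : ℝ) (hB0 : 0 ≤ B) (fM : ∀ M, HM M) (hB : ∀ M, ‖fM M‖ ≤ B)
    (f : ProbabilityMeasure X → ℝ) (hf : Continuous f)
    (hfMF : ∀ ε : ℝ, 0 < ε → ∃ M₀ : ℕ, ∀ M ≥ M₀, ∀ x : Fin (M + 1) → X,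
      |⟪fM M, ΦM M x⟫ - f (empProb x)| ≤ ε) :
    ∃ g : Hk, (∀ μ, f μ = ⟪g, Φ μ⟫) ∧ ‖g‖ ≤ B :=
  exists_inner_eq_of_abs_sum_le hdense hB0
    (abs_sum_mul_le_mul_norm_sum_smul hkM hkk hLipk hMF hB hf hfMF)

/-- Mean field compactness of RKHS balls. If the kernels `k_M` on `X^M` (bounded,
Lipschitz w.r.t. empirical-measure distances) converge in mean field to the kernel `k` on
`P(X)`, `f_M ∈ H_{k_M}` with `‖f_M‖ ≤ B`, and `f_M` converges in mean field to a continuous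
`f : P(X) → ℝ`, then `f` belongs to the RKHS `H_k` of `k` (i.e. is represented by some `g`)
with `‖f‖_k ≤ B`. RKHSs are realized via feature maps `Φ_M`, `Φ`. -/
theorem mean_field_rkhs_membership
    {X : Type*} [MetricSpace X] [CompactSpace X] [Nonempty X]
    [MeasurableSpace X] [BorelSpace X]
    {HM : ℕ → Type*} [∀ M, NormedAddCommGroup (HM M)] [∀ M, InnerProductSpace ℝ (HM M)]
    [∀ M, CompleteSpace (HM M)]
    (ΦM : ∀ M : ℕ, (Fin (M + 1) → X) → HM M)
    (kM : ∀ M : ℕ, (Fin (M + 1) → X) → (Fin (M + 1) → X) → ℝ)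
    (hkM : ∀ M x x', kM M x x' = ⟪ΦM M x, ΦM M x'⟫)
    {Hk : Type*} [NormedAddCommGroup Hk] [InnerProductSpace ℝ Hk] [CompleteSpace Hk]
    (Φ : ProbabilityMeasure X → Hk)
    (k : ProbabilityMeasure X → ProbabilityMeasure X → ℝ)
    (hkk : ∀ μ ν, k μ ν = ⟪Φ μ, Φ ν⟫)
    (hdense : Dense (Submodule.span ℝ (Set.range Φ) : Set Hk))
    (C_k L_k : ℝ)
    (hbdM : ∀ M x x', |kM M x x'| ≤ C_k)
    (hbdk : ∀ μ ν, |k μ ν| ≤ C_k)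
    (hLipM : ∀ M (x₁ x₁' x₂ x₂' : Fin (M + 1) → X),
      |kM M x₁ x₁' - kM M x₂ x₂'| ≤
        L_k * (dKR (empMeasure x₁) (empMeasure x₂) + dKR (empMeasure x₁') (empMeasure x₂')))
    (hLipk : ∀ μ₁ μ₁' μ₂ μ₂' : ProbabilityMeasure X,
      |k μ₁ μ₁' - k μ₂ μ₂'| ≤
        L_k * (dKR (μ₁ : Measure X) (μ₂ : Measure X) + dKR (μ₁' : Measure X) (μ₂' : Measure X)))
    (hMF : ∀ ε : ℝ, 0 < ε → ∃ M₀ : ℕ, ∀ M ≥ M₀, ∀ x x' : Fin (M + 1) → X,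
      |kM M x x' - k (empProb x) (empProb x')| ≤ ε)
    (B : ℝ) (hB0 : 0 ≤ B) (fM : ∀ M, HM M) (hB : ∀ M, ‖fM M‖ ≤ B)
    (f : ProbabilityMeasure X → ℝ) (hf : Continuous f)
    (hfMF : ∀ ε : ℝ, 0 < ε → ∃ M₀ : ℕ, ∀ M ≥ M₀, ∀ x : Fin (M + 1) → X,
      |⟪fM M, ΦM M x⟫ - f (empProb x)| ≤ ε) :
    ∃ g : Hk, (∀ μ, f μ = ⟪g, Φ μ⟫) ∧ ‖g‖ ≤ B :=
  mean_field_rkhs_membership_general ΦM kM hkM Φ k hkk hdense L_k hLipk hMF B hB0 fM hB f hf hfMF
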